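/- Let p be a prime and m ≤ n positive integers, and let A be a subset of G' = ℤ_{p^m} × ℤ_{p^n}. Suppose there exist a ∈ p^{m−1}ℤ_{p^m} (i.e., a is a multiple of p^{m−1} in ℤ_{p^m}), an integer s ≥ 1, and integers 0 ≤ i₁ < i₂ < ⋯ < i_s ≤ n−1 such that (a, p^{i₁}) ∈ Z_A and (0, p^{i_r}) ∈ Z_A for all r = 2, …, s. Then p^s divides |A|. -/
import Mathlib


open Complex

/-- The inner product on `ℤ_{p^m} × ℤ_{p^n}` (`m ≤ n`):
`⟨u,v⟩ = p^(n-m)·u₁·v₁ + u₂·v₂` in `ℤ_{p^n}`. -/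
def inn' (p m n : ℕ) (u v : ZMod (p ^ m) × ZMod (p ^ n)) : ZMod (p ^ n) :=
  (p : ZMod (p ^ n)) ^ (n - m) * (u.1.val : ZMod (p ^ n)) * (v.1.val : ZMod (p ^ n)) +
    u.2 * v.2

/-- The character `χ_g(h) = e^(2πi⟨g,h⟩/p^n)`. -/
noncomputable def chi' (p m n : ℕ) (g h : ZMod (p ^ m) × ZMod (p ^ n)) : ℂ :=
  Complex.exp (2 * Real.pi * Complex.I * ((inn' p m n g h).val : ℂ) / ((p : ℂ) ^ n))

/-- `χ_g(A) = Σ_{a ∈ A} χ_g(a)`. -/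
noncomputable def chiSum' (p m n : ℕ) (g : ZMod (p ^ m) × ZMod (p ^ n))
    (A : Finset (ZMod (p ^ m) × ZMod (p ^ n))) : ℂ :=
  ∑ a ∈ A, chi' p m n g a

/-- The zero set `Z_A = {g : χ_g(A) = 0}`. -/
def zeroSet' (p m n : ℕ) (A : Finset (ZMod (p ^ m) × ZMod (p ^ n))) :
    Set (ZMod (p ^ m) × ZMod (p ^ n)) :=
  {g | chiSum' p m n g A = 0}

/-- Divisibility property in `ℤ_{p^m} × ℤ_{p^n}`: if `a ∈ p^(m-1)·ℤ_{p^m}` and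
`(a, p^(i₁)), (0, p^(i₂)), …, (0, p^(i_s)) ∈ Z_A` with `0 ≤ i₁ < ⋯ < i_s ≤ n - 1`,
then `p^s ∣ |A|`. -/
theorem pow_dvd_card_of_zeroSet' (p m n : ℕ) (hp : p.Prime) (hm : 1 ≤ m) (hmn : m ≤ n)
    (A : Finset (ZMod (p ^ m) × ZMod (p ^ n)))
    (a : ZMod (p ^ m)) (ha : ∃ c : ZMod (p ^ m), a = (p : ZMod (p ^ m)) ^ (m - 1) * c)
    (s : ℕ) (hs : 1 ≤ s)
    (i : Fin s → ℕ) (hmono : StrictMono i) (hle : ∀ r : Fin s, i r ≤ n - 1)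
    (h1 : (a, (p : ZMod (p ^ n)) ^ i ⟨0, hs⟩) ∈ zeroSet' p m n A)
    (h2 : ∀ r : Fin s, r ≠ ⟨0, hs⟩ →
      ((0 : ZMod (p ^ m)), (p : ZMod (p ^ n)) ^ i r) ∈ zeroSet' p m n A) :
    p ^ s ∣ A.card := by
  classical
  obtain ⟨c, hc⟩ := ha
  haveI : Fact p.Prime := ⟨hp⟩
  have hn1 : 1 ≤ n := hm.trans hmn
  have hpn : (p : ℕ) ^ n ≠ 0 := pow_ne_zero _ hp.pos.ne'
  haveI : NeZero (p ^ n) := ⟨hpn⟩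
  haveI : NeZero (p ^ m) := ⟨pow_ne_zero _ hp.pos.ne'⟩
  set i₁ : ℕ := i ⟨0, hs⟩ with hi₁
  have hi₁le : i₁ ≤ n - 1 := hle _
  -- the exponent function and the mask polynomial
  set u : ZMod (p ^ m) × ZMod (p ^ n) → ℕ :=
    fun h => p ^ (n - 1 - i₁) * c.val * h.1.val + h.2.val with hu
  set Q : Polynomial ℤ := ∑ h ∈ A, Polynomial.X ^ u h with hQ
  set ζ : ℂ := Complex.exp (2 * Real.pi * Complex.I / (p : ℂ) ^ n) with hζ
  have hprim : IsPrimitiveRoot ζ (p ^ n) := by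
    have := Complex.isPrimitiveRoot_exp (p ^ n) hpn
    simpa [hζ] using this
  -- power of ζ in terms of ZMod values
  have hzpow : ∀ N : ℕ, ζ ^ N =
      Complex.exp (2 * Real.pi * Complex.I * (((N : ZMod (p ^ n)).val : ℂ)) / (p : ℂ) ^ n) := by
    intro N
    rw [ZMod.val_natCast]
    conv_lhs => rw [← Nat.div_add_mod N (p ^ n)]
    rw [pow_add, pow_mul, hprim.pow_eq_one, one_pow, one_mul, ← Complex.exp_nat_mul]
    congr 1
    ring
  have hkey : ∀ (g h : ZMod (p ^ m) × ZMod (p ^ n)) (N : ℕ),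
      ((N : ZMod (p ^ n)) = inn' p m n g h) → ζ ^ N = chi' p m n g h := by
    intro g h N hN
    rw [hzpow N, hN, chi']
  -- the crucial identity for the first zero
  have hA1 : (p : ZMod (p ^ n)) ^ (n - m) * (a.val : ZMod (p ^ n)) =
      (p : ZMod (p ^ n)) ^ (n - 1) * (c.val : ZMod (p ^ n)) := by
    set M : ℕ := p ^ (m - 1) * c.val with hM
    have haM : a = (M : ZMod (p ^ m)) := by
      rw [hc, hM]; push_cast; rw [ZMod.natCast_val, ZMod.cast_id]
    have hval : a.val = M % p ^ m := by rw [haM, ZMod.val_natCast]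
    have hmod : (p ^ (n - m) * (M % p ^ m) : ℕ) ≡ p ^ (n - m) * M [MOD p ^ (n - m) * p ^ m] :=
      Nat.ModEq.mul_left' _ (Nat.mod_modEq M (p ^ m))
    have hpow : p ^ (n - m) * p ^ m = p ^ n := by rw [← pow_add]; congr 1; omega
    rw [hpow] at hmod
    have hcast : ((p ^ (n - m) * (M % p ^ m) : ℕ) : ZMod (p ^ n)) =
        ((p ^ (n - m) * M : ℕ) : ZMod (p ^ n)) :=
      (ZMod.natCast_eq_natCast_iff _ _ _).2 hmod
    rw [hval]
    push_cast at hcast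
    rw [hcast]
    rw [show ((M : ℕ) : ZMod (p ^ n)) = ((p : ZMod (p ^ n)) ^ (m - 1) * (c.val : ZMod (p ^ n)))
      by push_cast [hM]; ring]
    rw [← mul_assoc, ← pow_add]
    congr 2
    omega
  -- vanishing of Q at the relevant roots of unity
  have hpowzero : (p : ZMod (p ^ n)) ^ n = 0 := by
    rw [← Nat.cast_pow, ZMod.natCast_self]
  have haeval : ∀ r : Fin s, (Polynomial.aeval (ζ ^ p ^ i r)) Q = 0 := by
    intro r
    by_cases hr : r = ⟨0, hs⟩
    · subst hr
      have hg : ∀ h ∈ A, ζ ^ (p ^ i₁ * u h) =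
          chi' p m n (a, (p : ZMod (p ^ n)) ^ i₁) h := by
        intro h _
        apply hkey
        rw [inn']
        have hval2 : ((h.2.val : ℕ) : ZMod (p ^ n)) = h.2 := by
          rw [ZMod.natCast_val, ZMod.cast_id]
        have e1 : (p : ZMod (p ^ n)) ^ i₁ * (p : ZMod (p ^ n)) ^ (n - 1 - i₁) =
            (p : ZMod (p ^ n)) ^ (n - 1) := by
          rw [← pow_add]; congr 1; omega
        simp only [hu, Nat.cast_mul, Nat.cast_add, Nat.cast_pow]
        rw [hval2, hA1]
        linear_combination ((c.val : ZMod (p ^ n)) * (h.1.val : ZMod (p ^ n))) * e1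
      rw [hQ, map_sum]
      have : ∀ h ∈ A, (Polynomial.aeval (ζ ^ p ^ i₁)) (Polynomial.X ^ u h : Polynomial ℤ) =
          chi' p m n (a, (p : ZMod (p ^ n)) ^ i₁) h := by
        intro h hh
        rw [map_pow, Polynomial.aeval_X, ← pow_mul]
        exact hg h hh
      rw [Finset.sum_congr rfl this]
      exact h1
    · have hlt : (⟨0, hs⟩ : Fin s) < r :=
        lt_of_le_of_ne (by simp [Fin.le_def]) (Ne.symm hr)
      have hgt : i₁ + 1 ≤ i r := hmono hlt
      have hg : ∀ h ∈ A, ζ ^ (p ^ i r * u h) =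
          chi' p m n ((0 : ZMod (p ^ m)), (p : ZMod (p ^ n)) ^ i r) h := by
        intro h _
        apply hkey
        rw [inn']
        have hval2 : ((h.2.val : ℕ) : ZMod (p ^ n)) = h.2 := by
          rw [ZMod.natCast_val, ZMod.cast_id]
        have e2 : (p : ZMod (p ^ n)) ^ i r * (p : ZMod (p ^ n)) ^ (n - 1 - i₁) =
            0 := by
          rw [← pow_add, show i r + (n - 1 - i₁) = n + (i r + (n - 1 - i₁) - n) by omega,
            pow_add, hpowzero, zero_mul]
        simp only [hu, Nat.cast_mul, Nat.cast_add, Nat.cast_pow]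
        rw [hval2, ZMod.val_zero, Nat.cast_zero]
        linear_combination ((c.val : ZMod (p ^ n)) * (h.1.val : ZMod (p ^ n))) * e2
      rw [hQ, map_sum]
      have : ∀ h ∈ A, (Polynomial.aeval (ζ ^ p ^ i r)) (Polynomial.X ^ u h : Polynomial ℤ) =
          chi' p m n ((0 : ZMod (p ^ m)), (p : ZMod (p ^ n)) ^ i r) h := by
        intro h hh
        rw [map_pow, Polynomial.aeval_X, ← pow_mul]
        exact hg h hh
      rw [Finset.sum_congr rfl this]
      exact h2 r hr
  -- primitive roots and cyclotomic divisibility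
  have hprime_r : ∀ r : Fin s, IsPrimitiveRoot (ζ ^ p ^ i r) (p ^ (n - i r)) := by
    intro r
    refine hprim.pow (pow_pos hp.pos n) ?_
    rw [← pow_add]
    congr 1
    have := hle r
    omega
  have hposr : ∀ r : Fin s, 0 < p ^ (n - i r) := fun r => pow_pos hp.pos _
  have hcycl : ∀ r : Fin s, Polynomial.cyclotomic (p ^ (n - i r)) ℤ ∣ Q := by
    intro r
    rw [Polynomial.cyclotomic_eq_minpoly (hprime_r r) (hposr r)]
    exact minpoly.isIntegrallyClosed_dvd ((hprime_r r).isIntegral (hposr r)) (haeval r)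
  have hinj : ∀ r r' : Fin s, p ^ (n - i r) = p ^ (n - i r') → r = r' := by
    intro r r' hrr
    have h' := Nat.pow_right_injective hp.two_le hrr
    have hr1 := hle r
    have hr2 := hle r'
    exact hmono.injective (by omega)
  have hQmap : (∏ r : Fin s, Polynomial.cyclotomic (p ^ (n - i r)) ℚ) ∣
      Q.map (Int.castRingHom ℚ) := by
    apply Finset.prod_dvd_of_coprime
    · intro r _ r' _ hne
      exact Polynomial.cyclotomic.isCoprime_rat (fun h => hne (hinj r r' h))
    · intro r _
      rw [← Polynomial.map_cyclotomic_int]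
      exact Polynomial.map_dvd _ (hcycl r)
  have hdvdZ : (∏ r : Fin s, Polynomial.cyclotomic (p ^ (n - i r)) ℤ) ∣ Q := by
    rw [← Polynomial.map_dvd_map (Int.castRingHom ℚ) (by exact Int.cast_injective)
      (Polynomial.monic_prod_of_monic _ _ (fun r _ => Polynomial.cyclotomic.monic _ ℤ))]
    rw [Polynomial.map_prod]
    simpa [Polynomial.map_cyclotomic_int] using hQmap
  -- evaluate at 1
  have heval := Polynomial.eval_dvd (x := (1 : ℤ)) hdvdZ
  rw [Polynomial.eval_prod] at heval
  have hevalQ : Q.eval 1 = (A.card : ℤ) := by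
    rw [hQ, Polynomial.eval_finset_sum]
    simp
  have hevalc : ∀ r : Fin s, (Polynomial.cyclotomic (p ^ (n - i r)) ℤ).eval 1 = (p : ℤ) := by
    intro r
    have hnr : n - i r = (n - i r - 1) + 1 := by have := hle r; omega
    rw [hnr]
    exact Polynomial.eval_one_cyclotomic_prime_pow _
  rw [Finset.prod_congr rfl (fun r _ => hevalc r), hevalQ, Finset.prod_const,
    Finset.card_univ, Fintype.card_fin] at heval
  exact_mod_cast heval
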